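/- arXiv:2403.00958 — 3 statements merged into one kernel-verified Lean document; each statement's English description precedes it below -/
import Mathlib

section
/- Let P be a connected, non-separable type-C poset of height (1,1) such that the relation graph RG(P) is a tree. Then there exists a connected type-C poset P' of height (0,1) such that |V(P)| = |V(P')|, |E(P)| = |E(P')|, RG(P') is a tree, and ind g_C(P) = ind g_C(P'). -/
open scoped DirectSum

namespace LiePoset

/-- A type-C poset on the ground set `{-n, …, -1, 1, …, n} ⊆ ℤ`:
a partial order `le` supported on that set such that `i ≼ j` implies `i ≤ j` in `ℤ`,
and for `i ≠ -j`, `i ≼ j ↔ -j ≼ -i`. -/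
structure TypeCPoset (n : ℕ) where
  le : ℤ → ℤ → Prop
  supp : ∀ ⦃i j : ℤ⦄, le i j → i ≠ 0 ∧ |i| ≤ (n : ℤ) ∧ j ≠ 0 ∧ |j| ≤ (n : ℤ)
  refl : ∀ i : ℤ, i ≠ 0 → |i| ≤ (n : ℤ) → le i i
  antisymm : ∀ ⦃i j : ℤ⦄, le i j → le j i → i = j
  trans : ∀ ⦃i j k : ℤ⦄, le i j → le j k → le i k
  compat : ∀ ⦃i j : ℤ⦄, le i j → i ≤ j
  nsymm : ∀ ⦃i j : ℤ⦄, i ≠ -j → (le i j ↔ le (-j) (-i))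

namespace TypeCPoset

variable {n : ℕ}

/-- The strict relation `i ≺ j` of a type-C poset. -/
def lt (P : TypeCPoset n) (i j : ℤ) : Prop := P.le i j ∧ i ≠ j

/-- `P` has height one: every chain of `P` has cardinality at most two. -/
def HeightOne (P : TypeCPoset n) : Prop := ∀ i j k : ℤ, P.lt i j → P.lt j k → False

/-- `P` is separable: there is no relation `x ≺ y` with `x` negative and `y` positive. -/
def Separable (P : TypeCPoset n) : Prop := ∀ i j : ℤ, i < 0 → 0 < j → ¬ P.lt i j

/-- `P` has height `(1,1)`: `P⁺` has height exactly one and `P` has height exactly one. -/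
def Height11 (P : TypeCPoset n) : Prop :=
  P.HeightOne ∧ ∃ i j : ℤ, 0 < i ∧ 0 < j ∧ P.lt i j

/-- `P` has height `(0,1)`: `P⁺` has height zero and `P` has height exactly one. -/
def Height01 (P : TypeCPoset n) : Prop :=
  P.HeightOne ∧ (∀ i j : ℤ, 0 < i → 0 < j → ¬ P.lt i j) ∧ ∃ i j : ℤ, P.lt i j

end TypeCPoset

/-- The vertex set of the relation graph: the positive elements `{1, …, n}`. -/
abbrev Pos (n : ℕ) : Type := {i : ℤ // i ∈ Finset.Icc (1 : ℤ) (n : ℤ)}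

/-- The matrix index set `{-n, …, -1, 1, …, n}`. -/
abbrev Idx (n : ℕ) : Type := {i : ℤ // i ∈ (Finset.Icc (-(n : ℤ)) (n : ℤ)).erase 0}

/-- Negation on the index set. -/
def Idx.neg {n : ℕ} (a : Idx n) : Idx n :=
  ⟨-a.val, by
    have h := a.property
    simp only [Finset.mem_erase, Finset.mem_Icc] at h ⊢
    omega⟩

/-- A positive vertex as a matrix index. -/
def Pos.toIdx {n : ℕ} (i : Pos n) : Idx n :=
  ⟨i.val, by
    have h := i.property
    simp only [Finset.mem_erase, Finset.mem_Icc] at h ⊢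
    omega⟩

/-- `2n × 2n` complex matrices, with rows and columns indexed by `{-n, …, -1, 1, …, n}`. -/
abbrev Mat (n : ℕ) : Type := Matrix (Idx n) (Idx n) ℂ

namespace TypeCPoset

variable {n : ℕ}

/-- `D_i = E_{-i,-i} - E_{i,i}`. -/
def Dmat (i : Pos n) : Mat n :=
  Matrix.single i.toIdx.neg i.toIdx.neg 1 - Matrix.single i.toIdx i.toIdx 1

/-- `R^±_{i,j} = E_{-i,j} + E_{-j,i}`. -/
def Rpm (i j : Pos n) : Mat n :=
  Matrix.single i.toIdx.neg j.toIdx 1 + Matrix.single j.toIdx.neg i.toIdx 1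

/-- `R_{i,j} = E_{-j,-i} - E_{i,j}`. -/
def Rdash (i j : Pos n) : Mat n :=
  Matrix.single j.toIdx.neg i.toIdx.neg 1 - Matrix.single i.toIdx j.toIdx 1

/-- `E_{-i,i}`. -/
def Eloop (i : Pos n) : Mat n := Matrix.single i.toIdx.neg i.toIdx 1

/-- The standard spanning set of the type-C Lie poset algebra `g_C(P)`. -/
def gcSet (P : TypeCPoset n) : Set (Mat n) :=
  {M | (∃ i : Pos n, M = Dmat i)
      ∨ (∃ i j : Pos n, P.lt (-j.val) (-i.val) ∧ M = Rdash i j)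
      ∨ (∃ i j : Pos n, P.lt (-i.val) j.val ∧ P.lt (-j.val) i.val ∧ M = Rpm i j)
      ∨ (∃ i : Pos n, P.lt (-i.val) i.val ∧ M = Eloop i)}

/-- The simple graph underlying the relation graph `RG(P)`:
vertices `{1, …, n}`, with `i` adjacent to `j` (for `i ≠ j`) whenever there is a
(dashed or non-dashed) edge between them. -/
def RG (P : TypeCPoset n) : SimpleGraph (Pos n) where
  Adj i j := i ≠ j ∧ (P.lt (-i.val) j.val ∨ P.lt (-j.val) i.val ∨
      P.lt (-i.val) (-j.val) ∨ P.lt (-j.val) (-i.val))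
  symm := by
    constructor
    intro i j h
    exact ⟨h.1.symm, by tauto⟩
  loopless := by
    constructor
    intro i h
    exact h.1 rfl

/-- `RG(P)` has a (non-dashed) self-loop at vertex `i`, i.e. `-i ≺ i`. -/
def HasLoopAt (P : TypeCPoset n) (i : Pos n) : Prop := P.lt (-i.val) i.val

/-- There is a dashed edge `{i,j}` in `RG(P)`. -/
def DashedEdge (P : TypeCPoset n) (i j : Pos n) : Prop :=
  P.lt (-i.val) (-j.val) ∨ P.lt (-j.val) (-i.val)

/-- There is a non-dashed edge `{i,j}` in `RG(P)` (a self-loop when `i = j`). -/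
def NonDashedEdge (P : TypeCPoset n) (i j : Pos n) : Prop :=
  P.lt (-i.val) j.val ∨ P.lt (-j.val) i.val

open scoped Classical in
/-- The set of non-dashed edges of `RG(P)` (including self-loops). -/
noncomputable def edgesND (P : TypeCPoset n) : Finset (Sym2 (Pos n)) :=
  Finset.univ.filter fun e => ∃ i j : Pos n, e = Sym2.mk i j ∧ NonDashedEdge P i j

open scoped Classical in
/-- The set of dashed edges of `RG(P)`. -/
noncomputable def edgesD (P : TypeCPoset n) : Finset (Sym2 (Pos n)) :=
  Finset.univ.filter fun e => ∃ i j : Pos n, e = Sym2.mk i j ∧ i ≠ j ∧ DashedEdge P i j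

/-- `|E(P)|`, the number of edges of `RG(P)`. -/
noncomputable def numEdges (P : TypeCPoset n) : ℕ := (P.edgesND).card + (P.edgesD).card

/-- The cycles of `RG(P)`, recorded by their edge sets: a self-loop at `v`, or a cycle
of the underlying simple graph.  A cycle has an odd (resp. even) number of vertices
iff its edge set has odd (resp. even) cardinality. -/
def cycles (P : TypeCPoset n) : Set (Finset (Sym2 (Pos n))) :=
  {s | ∃ v : Pos n, P.HasLoopAt v ∧ s = {Sym2.mk v v}} ∪
  {s | ∃ (v : Pos n) (p : (RG P).Walk v v), p.IsCycle ∧ s = p.edges.toFinset}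

/-- The cycles of `RG(P)` contained in the connected component `c`. -/
def cyclesIn (P : TypeCPoset n) (c : (RG P).ConnectedComponent) :
    Set (Finset (Sym2 (Pos n))) :=
  {s | ∃ v : Pos n, (RG P).connectedComponentMk v = c ∧
    ((P.HasLoopAt v ∧ s = {Sym2.mk v v}) ∨
      ∃ p : (RG P).Walk v v, p.IsCycle ∧ s = p.edges.toFinset)}

/-- `η(P)`: the number of connected components of `RG(P)` containing no odd cycles. -/
noncomputable def eta (P : TypeCPoset n) : ℕ :=
  Nat.card {c : (RG P).ConnectedComponent // ¬ ∃ s ∈ P.cyclesIn c, Odd s.card}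

/-- The vertices visited by a cycle, recorded by its edge set. -/
def cycleVerts (s : Finset (Sym2 (Pos n))) : Set (Pos n) := {v | ∃ e ∈ s, v ∈ e}

end TypeCPoset

section LieDefs

variable (L : Type*) [LieRing L] [LieAlgebra ℂ L]

/-- The kernel of the bilinear form `B_φ(x, y) = φ⁅x, y⁆`. -/
def coadjKernel (φ : Module.Dual ℂ L) : Submodule ℂ L where
  carrier := {x | ∀ y : L, φ ⁅x, y⁆ = 0}
  add_mem' := by
    intro a b ha hb y
    simp only [Set.mem_setOf_eq] at ha hb ⊢
    rw [add_lie, map_add, ha y, hb y, add_zero]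
  zero_mem' := by
    intro y
    rw [zero_lie, map_zero]
  smul_mem' := by
    intro c x hx y
    simp only [Set.mem_setOf_eq] at hx ⊢
    rw [smul_lie, map_smul, hx y, smul_zero]

/-- The index of a Lie algebra: `ind g = min_{φ ∈ g*} dim ker(B_φ)`. -/
noncomputable def lieIndex : ℕ :=
  sInf (Set.range fun φ : Module.Dual ℂ L => Module.finrank ℂ (coadjKernel L φ))

/-- `φ` is a contact form on `L`: `L` is odd-dimensional and the restriction of
`B_φ(x, y) = φ⁅x, y⁆` to `ker φ` is nondegenerate. -/
def IsContactForm (φ : Module.Dual ℂ L) : Prop :=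
  Odd (Module.finrank ℂ L) ∧
    ∀ x : L, φ x = 0 → (∀ y : L, φ y = 0 → φ ⁅x, y⁆ = 0) → x = 0

/-- `L` is a contact Lie algebra. -/
def IsContact : Prop := ∃ φ : Module.Dual ℂ L, IsContactForm L φ

end LieDefs

end LiePoset

/-! Let `S` be the set of positive elements that are not maximal in `P`. As `P` has height one,
an element lying above another one is maximal; so a dashed edge `i ≺ j` has `i ∈ S`, `j ∉ S`, and
both ends of a non-dashed edge `-i ≺ j` (equivalently `-j ≺ i`) lie outside `S`. Conjugating by the
signed permutation matrix that exchanges `e_i` and `e_{-i}` for `i ∈ S`, with a sign on `e_{-i}`,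
therefore sends `D_i` to `±D_i`, fixes the generator of each non-dashed edge and sends the
generator `E_{-j,-i} - E_{i,j}` of a dashed edge to `E_{-i,j} + E_{-j,i}`. Hence `g_C(P)` is
isomorphic to `g_C(P')`, where `P'` makes every edge of `RG(P)` non-dashed: `-i ≺' j` iff `i` and
`j` are adjacent in `RG(P)`. Then `RG(P') = RG(P)`, and the edge counts agree because `RG(P)` has
no loops and height one forbids a pair from carrying edges of both kinds. -/

lemma Sym2.exists_mk_eq_and_iff {α : Type*} {r : α → α → Prop} (hr : ∀ a b, r a b → r b a)
    (a b : α) : (∃ i j, s(a, b) = s(i, j) ∧ r i j) ↔ r a b := by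
  refine ⟨?_, fun h => ⟨a, b, rfl, h⟩⟩
  rintro ⟨i, j, hab, h⟩
  rcases Sym2.eq_iff.mp hab with ⟨rfl, rfl⟩ | ⟨rfl, rfl⟩
  exacts [h, hr _ _ h]

namespace LiePoset

attribute [local instance 100] LieRing.ofAssociativeRing

open Matrix

section LieIndex

variable {L L' : Type*} [LieRing L] [LieAlgebra ℂ L] [LieRing L'] [LieAlgebra ℂ L']

lemma coadjKernel_dualMap (e : L ≃ₗ⁅ℂ⁆ L') (φ : Module.Dual ℂ L') :
    coadjKernel L (e.toLinearEquiv.dualMap φ) =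
      (coadjKernel L' φ).comap (e.toLinearEquiv : L →ₗ[ℂ] L') := by
  ext x
  refine ⟨fun hx y => ?_, fun hx y => ?_⟩
  · simpa [LieEquiv.map_lie] using hx (e.symm y)
  · simpa [LieEquiv.map_lie] using hx (e y)

lemma lieIndex_congr (e : L ≃ₗ⁅ℂ⁆ L') : lieIndex L = lieIndex L' := by
  have hrank : ∀ φ : Module.Dual ℂ L',
      Module.finrank ℂ (coadjKernel L (e.toLinearEquiv.dualMap φ)) =
        Module.finrank ℂ (coadjKernel L' φ) := fun φ => by
    rw [coadjKernel_dualMap, Submodule.comap_equiv_eq_map_symm, LinearEquiv.finrank_map_eq]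
  unfold lieIndex
  rw [← e.toLinearEquiv.dualMap.surjective.range_comp]
  exact congrArg sInf (congrArg Set.range (funext hrank))

lemma lieIndex_eq_of_map_eq {A A' : Type*} [Ring A] [Algebra ℂ A] [Ring A'] [Algebra ℂ A']
    (e : A ≃ₐ[ℂ] A') {g : LieSubalgebra ℂ A} {g' : LieSubalgebra ℂ A'}
    (h : g.toSubmodule.map e.toLinearMap = g'.toSubmodule) : lieIndex g = lieIndex g' :=
  lieIndex_congr (e.toLieEquiv.ofSubalgebras g g' (LieSubalgebra.toSubmodule_injective h))

end LieIndex

variable {n : ℕ}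

lemma Pos.val_le (i : Pos n) : i.val ≤ n := (Finset.mem_Icc.mp i.property).2

lemma Pos.val_pos (i : Pos n) : 0 < i.val :=
  Int.lt_iff_add_one_le.mpr (Finset.mem_Icc.mp i.property).1

@[simp] lemma Idx.val_neg (a : Idx n) : a.neg.val = -a.val := rfl

@[simp] lemma Idx.neg_neg (a : Idx n) : a.neg.neg = a := Subtype.ext (by simp)

@[simp] lemma Pos.val_toIdx (i : Pos n) : i.toIdx.val = i.val := rfl

section Flip

variable (S : Set ℤ)

open scoped Classical in
noncomputable def flipIdx : Equiv.Perm (Idx n) :=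
  Function.Involutive.toPerm (fun a => if |a.val| ∈ S then a.neg else a) fun a => by
    by_cases h : |a.val| ∈ S <;> simp [h]

open scoped Classical in
noncomputable def flipSign (a : Idx n) : ℂ :=
  if a.val < 0 ∧ -a.val ∈ S then -1 else 1

lemma flipSign_mul_self (a : Idx n) : flipSign S a * flipSign S a = 1 := by
  unfold flipSign
  split_ifs <;> norm_num

noncomputable def flipSignUnit : (Mat n)ˣ :=
  have h : diagonal (flipSign S) * diagonal (flipSign S) = 1 := by
    rw [diagonal_mul_diagonal, ← diagonal_one]
    exact congrArg diagonal (funext (flipSign_mul_self S))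
  ⟨diagonal (flipSign S), diagonal (flipSign S), h, h⟩

noncomputable def flipAut : Mat n ≃ₐ[ℂ] Mat n :=
  (reindexAlgEquiv ℂ ℂ (flipIdx S)).trans
    (MulSemiringAction.toAlgEquiv ℂ (Mat n) (ConjAct.toConjAct (flipSignUnit (n := n) S)))

lemma flipAut_single (p q : Idx n) (c : ℂ) :
    flipAut S (single p q c) =
      single (flipIdx S p) (flipIdx S q)
        (flipSign S (flipIdx S p) * c * flipSign S (flipIdx S q)) := by
  ext a b
  simp only [flipAut, AlgEquiv.trans_apply, coe_reindexAlgEquiv, reindex_apply,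
    submatrix_single_equiv, MulSemiringAction.toAlgEquiv_apply, ConjAct.units_smul_def,
    ConjAct.ofConjAct_toConjAct, Equiv.symm_symm]
  simp only [flipSignUnit, Units.inv_mk, diagonal_mul, mul_diagonal, single_apply]
  split_ifs with h
  · rw [h.1, h.2]
  · rw [mul_zero, zero_mul]

open TypeCPoset

open scoped Classical

variable {S} (i j : Pos n)

lemma flipIdx_apply (a : Idx n) : flipIdx S a = if |a.val| ∈ S then a.neg else a := rfl

@[simp] lemma flipIdx_toIdx : flipIdx S i.toIdx = if i.val ∈ S then i.toIdx.neg else i.toIdx := by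
  simp [flipIdx_apply, abs_of_pos i.val_pos]

@[simp] lemma flipIdx_neg_toIdx :
    flipIdx S i.toIdx.neg = if i.val ∈ S then i.toIdx else i.toIdx.neg := by
  by_cases h : i.val ∈ S <;> simp [flipIdx_apply, abs_of_pos i.val_pos, h]

@[simp] lemma flipSign_toIdx : flipSign S i.toIdx = 1 := by
  simp [flipSign, lt_asymm i.val_pos]

@[simp] lemma flipSign_neg_toIdx : flipSign S i.toIdx.neg = if i.val ∈ S then -1 else 1 := by
  simp [flipSign, i.val_pos]

lemma flipAut_Dmat : flipAut S (Dmat i) = if i.val ∈ S then -Dmat i else Dmat i := by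
  by_cases h : i.val ∈ S <;>
    simp [Dmat, flipAut_single, h]

lemma flipAut_Rpm (hi : i.val ∉ S) (hj : j.val ∉ S) : flipAut S (Rpm i j) = Rpm i j := by
  simp [Rpm, flipAut_single, hi, hj]

lemma flipAut_Rdash (hi : i.val ∈ S) (hj : j.val ∉ S) : flipAut S (Rdash i j) = Rpm i j := by
  simp [Rdash, Rpm, flipAut_single, hi, hj]
  rw [sub_eq_add_neg, ← single_neg, neg_neg, add_comm]

end Flip

namespace TypeCPoset

variable (P : TypeCPoset n)

lemma lt_iff_neg_lt_neg {a b : ℤ} (h : a ≠ -b) : P.lt a b ↔ P.lt (-b) (-a) := by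
  rw [lt, lt, P.nsymm h, ne_eq, ne_eq, neg_inj, eq_comm]

lemma lt_neg_comm (i j : Pos n) : P.lt (-i.val) j.val ↔ P.lt (-j.val) i.val := by
  by_cases h : i = j
  · rw [h]
  · rw [P.lt_iff_neg_lt_neg fun hc => h (Subtype.ext (neg_inj.mp hc)), neg_neg]

lemma lt_neg_neg_iff (i j : Pos n) : P.lt (-j.val) (-i.val) ↔ P.lt i.val j.val := by
  rw [P.lt_iff_neg_lt_neg (by linarith [i.val_pos, j.val_pos]), neg_neg, neg_neg]

lemma RG_adj_iff (i j : Pos n) :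
    (RG P).Adj i j ↔ i ≠ j ∧ (P.lt (-i.val) j.val ∨ P.lt i.val j.val ∨ P.lt j.val i.val) := by
  change i ≠ j ∧ (_ ∨ _ ∨ _ ∨ _) ↔ _
  rw [← P.lt_neg_comm i j, P.lt_neg_neg_iff i j, P.lt_neg_neg_iff j i]
  tauto

def ofGraph (G : SimpleGraph (Pos n)) : TypeCPoset n where
  le a b := (a = b ∧ a ≠ 0 ∧ |a| ≤ n) ∨ ∃ i j : Pos n, G.Adj i j ∧ a = -i.val ∧ b = j.val
  supp := by
    rintro a b (⟨rfl, ha, ha'⟩ | ⟨i, j, -, rfl, rfl⟩)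
    · exact ⟨ha, ha', ha, ha'⟩
    · have := i.val_pos; have := i.val_le; have := j.val_pos; have := j.val_le
      refine ⟨by omega, ?_, by omega, ?_⟩ <;> rw [abs_le] <;> constructor <;> omega
  refl a ha ha' := Or.inl ⟨rfl, ha, ha'⟩
  antisymm := by
    rintro a b (⟨rfl, -⟩ | ⟨i, j, -, rfl, rfl⟩) (⟨h, -⟩ | ⟨k, l, -, hk, hl⟩)
    all_goals first | rfl | exact h.symm | linarith [i.val_pos, j.val_pos, k.val_pos, l.val_pos]
  trans := by
    rintro a b c (⟨rfl, -⟩ | ⟨i, j, hij, rfl, rfl⟩) hbc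
    · exact hbc
    · rcases hbc with ⟨rfl, -⟩ | ⟨k, l, -, hk, rfl⟩
      · exact Or.inr ⟨i, j, hij, rfl, rfl⟩
      · linarith [j.val_pos, k.val_pos]
  compat := by
    rintro a b (⟨rfl, -⟩ | ⟨i, j, -, rfl, rfl⟩)
    · rfl
    · linarith [i.val_pos, j.val_pos]
  nsymm := by
    intro a b _
    constructor
    · rintro (⟨rfl, ha, ha'⟩ | ⟨i, j, hij, rfl, rfl⟩)
      · exact Or.inl ⟨rfl, neg_ne_zero.mpr ha, by rwa [abs_neg]⟩
      · exact Or.inr ⟨j, i, hij.symm, rfl, neg_neg _⟩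
    · rintro (⟨h, ha, ha'⟩ | ⟨i, j, hij, h1, h2⟩)
      · obtain rfl := neg_inj.mp h
        exact Or.inl ⟨rfl, neg_ne_zero.mp ha, by rwa [abs_neg] at ha'⟩
      · exact Or.inr ⟨j, i, hij.symm, by linarith, by linarith⟩

variable (G : SimpleGraph (Pos n))

lemma lt_ofGraph_iff {a b : ℤ} :
    (ofGraph G).lt a b ↔ ∃ i j : Pos n, G.Adj i j ∧ a = -i.val ∧ b = j.val := by
  refine ⟨?_, ?_⟩
  · rintro ⟨⟨h, -⟩ | h, hab⟩
    · exact absurd h hab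
    · exact h
  · rintro ⟨i, j, hij, rfl, rfl⟩
    exact ⟨Or.inr ⟨i, j, hij, rfl, rfl⟩, by linarith [i.val_pos, j.val_pos]⟩

lemma lt_zero_and_pos_of_lt_ofGraph {a b : ℤ} (h : (ofGraph G).lt a b) : a < 0 ∧ 0 < b := by
  obtain ⟨i, j, -, rfl, rfl⟩ := (lt_ofGraph_iff G).mp h
  exact ⟨neg_neg_of_pos i.val_pos, j.val_pos⟩

lemma neg_lt_ofGraph_iff (i j : Pos n) : (ofGraph G).lt (-i.val) j.val ↔ G.Adj i j := by
  rw [lt_ofGraph_iff]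
  refine ⟨?_, fun h => ⟨i, j, h, rfl, rfl⟩⟩
  rintro ⟨k, l, hkl, hk, hl⟩
  rwa [Subtype.ext (neg_inj.mp hk), Subtype.ext hl]

lemma RG_ofGraph : RG (ofGraph G) = G := by
  ext i j
  rw [RG_adj_iff, neg_lt_ofGraph_iff]
  have hpos : ∀ k l : Pos n, ¬ (ofGraph G).lt k.val l.val := fun k l h =>
    (lt_zero_and_pos_of_lt_ofGraph G h).1.not_gt k.val_pos
  exact ⟨fun h => h.2.resolve_right (not_or.mpr ⟨hpos i j, hpos j i⟩), fun h => ⟨h.ne, Or.inl h⟩⟩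

lemma heightOne_ofGraph : (ofGraph G).HeightOne := fun _ _ _ hab hbc =>
  (lt_zero_and_pos_of_lt_ofGraph G hab).2.not_gt (lt_zero_and_pos_of_lt_ofGraph G hbc).1

lemma height01_ofGraph {i j : Pos n} (hij : G.Adj i j) : (ofGraph G).Height01 :=
  ⟨heightOne_ofGraph G, fun _ _ ha _ h => (lt_zero_and_pos_of_lt_ofGraph G h).1.not_gt ha,
    -i.val, j.val, (neg_lt_ofGraph_iff G i j).mpr hij⟩

lemma not_hasLoopAt_ofGraph (v : Pos n) : ¬ (ofGraph G).HasLoopAt v := by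
  rw [HasLoopAt, neg_lt_ofGraph_iff]
  exact G.loopless.irrefl v

lemma mem_edgesND_mk (i j : Pos n) : s(i, j) ∈ P.edgesND ↔ P.lt (-i.val) j.val := by
  have hnd : ∀ k l : Pos n, NonDashedEdge P k l ↔ P.lt (-k.val) l.val := fun k l => by
    rw [NonDashedEdge, ← lt_neg_comm, or_self]
  simp only [edgesND, Finset.mem_filter, Finset.mem_univ, true_and]
  rw [Sym2.exists_mk_eq_and_iff (fun k l h => by rwa [hnd, lt_neg_comm, ← hnd] at h), hnd]

lemma mem_edgesD_mk (i j : Pos n) :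
    s(i, j) ∈ P.edgesD ↔ i ≠ j ∧ (P.lt i.val j.val ∨ P.lt j.val i.val) := by
  simp only [edgesD, Finset.mem_filter, Finset.mem_univ, true_and]
  rw [Sym2.exists_mk_eq_and_iff (r := fun k l => k ≠ l ∧ DashedEdge P k l)
    (fun k l h => ⟨h.1.symm, h.2.symm⟩), DashedEdge, lt_neg_neg_iff, lt_neg_neg_iff, or_comm]

lemma numEdges_eq_ncard_edgeSet (hP : P.HeightOne) (hloop : ∀ v, ¬ P.HasLoopAt v) :
    P.numEdges = (RG P).edgeSet.ncard := by
  have hunion : (↑(P.edgesND ∪ P.edgesD) : Set (Sym2 (Pos n))) = (RG P).edgeSet := by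
    ext e
    induction e using Sym2.ind with
    | h i j =>
      rw [Finset.coe_union, Set.mem_union, Finset.mem_coe, Finset.mem_coe, mem_edgesND_mk,
        mem_edgesD_mk, SimpleGraph.mem_edgeSet, RG_adj_iff]
      have hne : P.lt (-i.val) j.val → i ≠ j := by
        rintro h rfl
        exact hloop i h
      tauto
  have hdisj : Disjoint P.edgesND P.edgesD := by
    rw [Finset.disjoint_left]
    intro e
    induction e using Sym2.ind with
    | h i j =>
      rw [mem_edgesND_mk, mem_edgesD_mk]
      rintro h ⟨-, hij | hji⟩
      · exact hP _ _ _ ((P.lt_neg_neg_iff i j).mpr hij) h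
      · exact hP _ _ _ h hji
  rw [numEdges, ← Finset.card_union_of_disjoint hdisj, ← Set.ncard_coe_finset, hunion]

lemma cycles_eq_empty_iff : P.cycles = ∅ ↔ (∀ v, ¬ P.HasLoopAt v) ∧ (RG P).IsAcyclic := by
  rw [cycles, Set.union_empty_iff, Set.eq_empty_iff_forall_notMem, Set.eq_empty_iff_forall_notMem]
  simp only [Set.mem_ofPred_eq, SimpleGraph.IsAcyclic]
  constructor
  · rintro ⟨hloop, hcyc⟩
    exact ⟨fun v hv => hloop _ ⟨v, hv, rfl⟩, fun v p hp => hcyc _ ⟨v, p, hp, rfl⟩⟩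
  · rintro ⟨hloop, hcyc⟩
    exact ⟨fun _ ⟨v, hv, _⟩ => hloop v hv, fun _ ⟨v, p, hp, _⟩ => hcyc p hp⟩

lemma exists_adj_of_not_separable (hloop : ∀ v, ¬ P.HasLoopAt v) (hns : ¬ P.Separable) :
    ∃ i j : Pos n, (RG P).Adj i j := by
  simp only [Separable, not_forall, not_not] at hns
  obtain ⟨a, b, ha, hb, hab⟩ := hns
  obtain ⟨-, ha', -, hb'⟩ := P.supp hab.1
  rw [abs_of_neg ha] at ha'
  rw [abs_of_pos hb] at hb'
  let i : Pos n := ⟨-a, Finset.mem_Icc.mpr ⟨by omega, ha'⟩⟩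
  let j : Pos n := ⟨b, Finset.mem_Icc.mpr ⟨by omega, hb'⟩⟩
  have hij : P.lt (-i.val) j.val := by simpa [i, j] using hab
  refine ⟨i, j, (P.RG_adj_iff i j).mpr ⟨?_, Or.inl hij⟩⟩
  rintro hc
  rw [hc] at hij
  exact hloop j hij

variable {P}

def nonMaximal (P : TypeCPoset n) : Set ℤ := {a | ∃ b, P.lt a b}

lemma notMem_nonMaximal_of_lt (hP : P.HeightOne) {a b : ℤ} (h : P.lt a b) :
    b ∉ P.nonMaximal := fun ⟨_, hb⟩ => hP _ _ _ h hb

lemma Rpm_comm (i j : Pos n) : Rpm i j = Rpm j i := add_comm _ _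

lemma Dmat_mem_gcSet (i : Pos n) : Dmat i ∈ gcSet P := Or.inl ⟨i, rfl⟩

lemma Rdash_mem_gcSet {i j : Pos n} (h : P.lt i.val j.val) : Rdash i j ∈ gcSet P :=
  Or.inr (Or.inl ⟨i, j, (P.lt_neg_neg_iff i j).mpr h, rfl⟩)

lemma Rpm_mem_gcSet {i j : Pos n} (h : P.lt (-i.val) j.val) : Rpm i j ∈ gcSet P :=
  Or.inr (Or.inr (Or.inl ⟨i, j, h, (P.lt_neg_comm i j).mp h, rfl⟩))

lemma flipAut_nonMaximal_Rpm (hP : P.HeightOne) {i j : Pos n} (h : P.lt (-i.val) j.val) :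
    flipAut P.nonMaximal (Rpm i j) = Rpm i j :=
  flipAut_Rpm i j (notMem_nonMaximal_of_lt hP ((P.lt_neg_comm i j).mp h))
    (notMem_nonMaximal_of_lt hP h)

lemma flipAut_nonMaximal_Rdash (hP : P.HeightOne) {i j : Pos n} (h : P.lt i.val j.val) :
    flipAut P.nonMaximal (Rdash i j) = Rpm i j :=
  flipAut_Rdash i j ⟨j.val, h⟩ (notMem_nonMaximal_of_lt hP h)

lemma flipAut_mem_span_gcSet_ofGraph (hP : P.HeightOne) (hloop : ∀ v, ¬ P.HasLoopAt v)
    {x : Mat n} (hx : x ∈ gcSet P) :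
    flipAut P.nonMaximal x ∈ Submodule.span ℂ (gcSet (ofGraph (RG P))) := by
  have hRpm : ∀ {i j : Pos n}, (RG P).Adj i j →
      Rpm i j ∈ Submodule.span ℂ (gcSet (ofGraph (RG P))) := fun hij =>
    Submodule.subset_span (Rpm_mem_gcSet ((neg_lt_ofGraph_iff _ _ _).mpr hij))
  rcases hx with ⟨i, rfl⟩ | ⟨i, j, hij, rfl⟩ | ⟨i, j, hij, -, rfl⟩ | ⟨i, hi, -⟩
  · rw [flipAut_Dmat]
    split_ifs
    exacts [neg_mem (Submodule.subset_span (Dmat_mem_gcSet i)),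
      Submodule.subset_span (Dmat_mem_gcSet i)]
  · rw [P.lt_neg_neg_iff] at hij
    rw [flipAut_nonMaximal_Rdash hP hij]
    exact hRpm ((P.RG_adj_iff i j).mpr ⟨fun h => hij.2 (congrArg _ h), Or.inr (Or.inl hij)⟩)
  · rw [flipAut_nonMaximal_Rpm hP hij]
    refine hRpm ((P.RG_adj_iff i j).mpr ⟨?_, Or.inl hij⟩)
    rintro rfl
    exact hloop i hij
  · exact absurd hi (hloop i)

lemma mem_map_span_gcSet_of_mem_gcSet_ofGraph (hP : P.HeightOne) {y : Mat n}
    (hy : y ∈ gcSet (ofGraph (RG P))) :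
    y ∈ (Submodule.span ℂ (gcSet P)).map (flipAut P.nonMaximal).toLinearMap := by
  have hmem : ∀ {x : Mat n}, x ∈ gcSet P →
      flipAut P.nonMaximal x ∈
        (Submodule.span ℂ (gcSet P)).map (flipAut P.nonMaximal).toLinearMap :=
    fun hx => Submodule.mem_map_of_mem (Submodule.subset_span hx)
  rcases hy with ⟨i, rfl⟩ | ⟨i, j, hij, rfl⟩ | ⟨i, j, hij, -, rfl⟩ | ⟨i, hi, -⟩
  · by_cases h : i.val ∈ P.nonMaximal
    · refine ⟨-Dmat i, neg_mem (Submodule.subset_span (Dmat_mem_gcSet i)), ?_⟩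
      simp [flipAut_Dmat, h]
    · simpa [flipAut_Dmat, h] using hmem (Dmat_mem_gcSet i)
  · exact absurd (lt_zero_and_pos_of_lt_ofGraph _ hij).2 (neg_neg_of_pos i.val_pos).not_gt
  · rw [neg_lt_ofGraph_iff, RG_adj_iff] at hij
    rcases hij.2 with h | h | h
    · simpa [flipAut_nonMaximal_Rpm hP h] using hmem (Rpm_mem_gcSet h)
    · simpa [flipAut_nonMaximal_Rdash hP h] using hmem (Rdash_mem_gcSet h)
    · simpa [flipAut_nonMaximal_Rdash hP h, Rpm_comm j i] using hmem (Rdash_mem_gcSet h)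
  · rw [neg_lt_ofGraph_iff] at hi
    exact absurd hi ((RG P).loopless.irrefl i)

lemma map_span_gcSet (hP : P.HeightOne) (hloop : ∀ v, ¬ P.HasLoopAt v) :
    (Submodule.span ℂ (gcSet P)).map (flipAut P.nonMaximal).toLinearMap =
      Submodule.span ℂ (gcSet (ofGraph (RG P))) := by
  refine le_antisymm ?_ (Submodule.span_le.mpr fun _ => mem_map_span_gcSet_of_mem_gcSet_ofGraph hP)
  exact (Submodule.map_span_le _ _ _).mpr fun _ => flipAut_mem_span_gcSet_ofGraph hP hloop

end TypeCPoset

/-- **Proposition.** Let `P` be a connected, non-separable type-C poset of height `(1,1)`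
such that `RG(P)` is a tree.  Then there exists a connected type-C poset `P'` of height
`(0,1)` (on the same vertex set, so `|V(P)| = |V(P')|`) such that `|E(P)| = |E(P')|`,
`RG(P')` is a tree, and `ind g_C(P) = ind g_C(P')`. -/
theorem tree_height11_reduction (n : ℕ) (P : TypeCPoset n)
    (hconn : (TypeCPoset.RG P).Connected) (hns : ¬ P.Separable)
    (h11 : P.Height11) (htree : P.cycles = ∅) :
    ∃ P' : TypeCPoset n,
      (TypeCPoset.RG P').Connected ∧ P'.Height01 ∧
      Fintype.card (Pos n) = Fintype.card (Pos n) ∧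
      P'.numEdges = P.numEdges ∧ P'.cycles = ∅ ∧
      ∀ (g g' : LieSubalgebra ℂ (Mat n)),
        g.toSubmodule = Submodule.span ℂ (TypeCPoset.gcSet P) →
        g'.toSubmodule = Submodule.span ℂ (TypeCPoset.gcSet P') →
        lieIndex ↥g = lieIndex ↥g' := by
  obtain ⟨hloop, hacyclic⟩ := P.cycles_eq_empty_iff.mp htree
  obtain ⟨i, j, hij⟩ := P.exists_adj_of_not_separable hloop hns
  set G := TypeCPoset.RG P
  have hRG : TypeCPoset.RG (TypeCPoset.ofGraph G) = G := TypeCPoset.RG_ofGraph G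
  refine ⟨TypeCPoset.ofGraph G, by rwa [hRG], TypeCPoset.height01_ofGraph G hij, rfl, ?_, ?_, ?_⟩
  · rw [TypeCPoset.numEdges_eq_ncard_edgeSet _ (TypeCPoset.heightOne_ofGraph G)
      (TypeCPoset.not_hasLoopAt_ofGraph G), hRG, P.numEdges_eq_ncard_edgeSet h11.1 hloop]
  · rw [TypeCPoset.cycles_eq_empty_iff, hRG]
    exact ⟨TypeCPoset.not_hasLoopAt_ofGraph G, hacyclic⟩
  · intro g g' hg hg'
    refine lieIndex_eq_of_map_eq (flipAut P.nonMaximal) ?_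
    rw [hg, hg', TypeCPoset.map_span_gcSet h11.1 hloop]

end LiePoset
end

section
/- Let P be a connected type-C poset of height one. If the relation graph RG(P) contains two self-loops (at two distinct vertices), then g_C(P) is not contact. -/
open scoped DirectSum

/-!
The matrices attached to the edges of `RG(P)` span an abelian subalgebra `𝔫` of `g_C(P)` on which
every `D_i` acts diagonally, and a suitable combination `H` of the `D_i` acts on `𝔫` as the
identity. Hence an `x ∈ 𝔫` with `φ⁅D_i, x⁆ = 0` for all `i` also has `φ x = φ⁅H, x⁆ = 0` and
`φ⁅x, y⁆ = 0` for all `y ∈ g_C(P)`, so a nonzero such `x` contradicts nondegeneracy. If `φ`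
vanishes on some edge matrix, that matrix is such an `x`. Otherwise start from `x = E_{-v,v}` and
follow a walk from `v` to `w`: crossing an edge `{q, r}` subtracts a multiple of its matrix that
moves the only nonzero value of `i ↦ φ⁅D_i, x⁆` from `q` to `r` and leaves the `(-v, v)` entry,
hence `x ≠ 0`, untouched. At `w` a multiple of `E_{-w,w}` removes that last nonzero value.
-/

namespace LiePoset

attribute [local instance 100] LieRing.ofAssociativeRing

open TypeCPoset Matrix

variable {n : ℕ}

lemma TypeCPoset.lt_iff_neg_lt_neg_s13 (P : TypeCPoset n) {i j : ℤ} (h : i ≠ -j) :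
    P.lt i j ↔ P.lt (-j) (-i) := by
  unfold TypeCPoset.lt
  rw [P.nsymm h]
  constructor <;> rintro ⟨hle, hne⟩ <;> exact ⟨hle, by omega⟩

lemma TypeCPoset.neg_lt {P : TypeCPoset n} {i j : Pos n} (hij : i ≠ j) :
    P.lt (-i.val) j.val ↔ P.lt (-j.val) i.val := by
  have hne : -i.val ≠ -j.val := fun h => hij (Subtype.ext (neg_inj.mp h))
  simpa using P.lt_iff_neg_lt_neg_s13 hne

lemma Pos.one_le_val (i : Pos n) : 1 ≤ i.val := (Finset.mem_Icc.mp i.property).1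

@[simp] lemma Pos.toIdx_inj {i j : Pos n} : i.toIdx = j.toIdx ↔ i = j :=
  ⟨fun h => Subtype.ext (congrArg (Subtype.val : Idx n → ℤ) h), fun h => h ▸ rfl⟩

@[simp] lemma Pos.neg_toIdx_inj {i j : Pos n} : i.toIdx.neg = j.toIdx.neg ↔ i = j :=
  ⟨fun h => Subtype.ext (neg_inj.mp (congrArg (Subtype.val : Idx n → ℤ) h)),
    fun h => h ▸ rfl⟩

@[simp] lemma Pos.toIdx_ne_neg_toIdx (i j : Pos n) : i.toIdx ≠ j.toIdx.neg := by
  intro h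
  have hval : i.val = -j.val := congrArg Subtype.val h
  have := i.one_le_val
  have := j.one_le_val
  omega

@[simp] lemma Pos.neg_toIdx_ne_toIdx (i j : Pos n) : i.toIdx.neg ≠ j.toIdx :=
  (Pos.toIdx_ne_neg_toIdx j i).symm

lemma single_one_mul_single_one {ι R : Type*} [Fintype ι] [DecidableEq ι] [Semiring R]
    (a b c d : ι) :
    single a b (1 : R) * single c d 1 = if b = c then single a d 1 else 0 := by
  split_ifs with h
  · rw [h, single_mul_single_same, one_mul]
  · exact single_mul_single_of_ne (h := h) ..

lemma lie_Dmat_eloop (k q : Pos n) :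
    ⁅Dmat k, Eloop q⁆ = (if k = q then 2 else 0 : ℂ) • Eloop q := by
  simp only [Ring.lie_def, Dmat, Eloop, sub_mul, mul_sub, single_one_mul_single_one,
    Pos.toIdx_inj, Pos.neg_toIdx_inj, Pos.toIdx_ne_neg_toIdx]
  split_ifs <;> subst_vars <;> first | module | simp_all

lemma lie_Dmat_rpm (k q r : Pos n) :
    ⁅Dmat k, Rpm q r⁆ =
      ((if k = q then 1 else 0) + (if k = r then 1 else 0) : ℂ) • Rpm q r := by
  simp only [Ring.lie_def, Dmat, Rpm, sub_mul, mul_sub, mul_add, add_mul,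
    single_one_mul_single_one, Pos.toIdx_inj, Pos.neg_toIdx_inj, Pos.toIdx_ne_neg_toIdx]
  split_ifs <;> subst_vars <;> first | module | simp_all

lemma lie_Dmat_rdash (k q r : Pos n) :
    ⁅Dmat k, Rdash q r⁆ =
      ((if k = r then 1 else 0) - (if k = q then 1 else 0) : ℂ) • Rdash q r := by
  simp only [Ring.lie_def, Dmat, Rdash, sub_mul, mul_sub, single_one_mul_single_one,
    Pos.toIdx_inj, Pos.neg_toIdx_inj, Pos.toIdx_ne_neg_toIdx]
  split_ifs <;> subst_vars <;> first | module | simp_all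

def edgeMatrices (P : TypeCPoset n) : Set (Mat n) :=
  {M | (∃ i j : Pos n, P.lt (-j.val) (-i.val) ∧ M = Rdash i j)
      ∨ (∃ i j : Pos n, P.lt (-i.val) j.val ∧ P.lt (-j.val) i.val ∧ M = Rpm i j)
      ∨ (∃ i : Pos n, P.lt (-i.val) i.val ∧ M = Eloop i)}

lemma edgeMatrices_subset_gcSet (P : TypeCPoset n) : edgeMatrices P ⊆ gcSet P :=
  fun _ hM => Or.inr hM

lemma eloop_mem_edgeMatrices {P : TypeCPoset n} {v : Pos n} (hv : P.HasLoopAt v) :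
    Eloop v ∈ edgeMatrices P :=
  Or.inr (Or.inr ⟨v, hv, rfl⟩)

lemma mul_eq_zero_of_mem_edgeMatrices {P : TypeCPoset n} (hP : P.HeightOne) {a b : Mat n}
    (ha : a ∈ edgeMatrices P) (hb : b ∈ edgeMatrices P) : a * b = 0 := by
  unfold HeightOne at hP
  -- a nonzero product `E_{a,b} * E_{b,c}` of matrix units would need a chain `a ≺ b ≺ c`
  obtain ⟨i, j, hij, rfl⟩ | ⟨i, j, hij, hji, rfl⟩ | ⟨i, hi, rfl⟩ := ha <;>
    obtain ⟨k, l, hkl, rfl⟩ | ⟨k, l, hkl, hlk, rfl⟩ | ⟨k, hk, rfl⟩ := hb <;>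
    simp only [Rdash, Rpm, Eloop, sub_mul, mul_sub, mul_add, add_mul, single_one_mul_single_one,
      Pos.toIdx_inj, Pos.neg_toIdx_inj, Pos.toIdx_ne_neg_toIdx, Pos.neg_toIdx_ne_toIdx,
      if_false] <;>
    (try split_ifs) <;> subst_vars <;> first | (exfalso; solve_by_elim) | simp

lemma ne_zero_of_mem_edgeMatrices {P : TypeCPoset n} {M : Mat n} (hM : M ∈ edgeMatrices P) :
    M ≠ 0 := by
  obtain ⟨i, j, -, rfl⟩ | ⟨i, j, -, -, rfl⟩ | ⟨i, -, rfl⟩ := hM <;> intro h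
  · simpa [Rdash] using congrFun (congrFun h i.toIdx) j.toIdx
  · have hij := congrFun (congrFun h i.toIdx.neg) j.toIdx
    by_cases hji : j = i <;> norm_num [Rpm, single_apply, hji] at hij
  · simpa [Eloop] using congrFun (congrFun h i.toIdx.neg) i.toIdx

lemma lie_eq_zero_of_mem_span_edgeMatrices {P : TypeCPoset n} (hP : P.HeightOne)
    {x M : Mat n} (hx : x ∈ Submodule.span ℂ (edgeMatrices P)) (hM : M ∈ edgeMatrices P) :
    ⁅x, M⁆ = 0 := by
  induction hx using Submodule.span_induction with
  | mem a ha =>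
    rw [Ring.lie_def, mul_eq_zero_of_mem_edgeMatrices hP ha hM,
      mul_eq_zero_of_mem_edgeMatrices hP hM ha, sub_zero]
  | zero => exact zero_lie M
  | add a b _ _ ha hb => rw [add_lie, ha, hb, add_zero]
  | smul c a _ ha => rw [smul_lie, ha, smul_zero]

lemma exists_weight_of_mem_edgeMatrices {P : TypeCPoset n} {M : Mat n}
    (hM : M ∈ edgeMatrices P) : ∃ a : Pos n → ℂ, ∀ i, ⁅Dmat i, M⁆ = a i • M := by
  obtain ⟨i, j, -, rfl⟩ | ⟨i, j, -, -, rfl⟩ | ⟨i, -, rfl⟩ := hM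
  · exact ⟨_, fun k => lie_Dmat_rdash k i j⟩
  · exact ⟨_, fun k => lie_Dmat_rpm k i j⟩
  · exact ⟨_, fun k => lie_Dmat_eloop k i⟩

-- `gradingElement P` is diagonal, with entry `1/2` at the minimal and `-1/2` at the maximal
-- elements of a height-one poset, so it acts by `1` on every `E_{a,b}` with `a ≺ b`.
open Classical in
noncomputable def gradingCoeff (P : TypeCPoset n) (i : Pos n) : ℂ :=
  if ∃ z, P.lt (-i.val) z then 1 / 2 else -1 / 2

noncomputable def gradingElement (P : TypeCPoset n) : Mat n := ∑ i, gradingCoeff P i • Dmat i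

lemma gradingCoeff_of_lt {P : TypeCPoset n} {i : Pos n} {z : ℤ} (h : P.lt (-i.val) z) :
    gradingCoeff P i = 1 / 2 :=
  if_pos ⟨z, h⟩

lemma gradingCoeff_of_gt {P : TypeCPoset n} (hP : P.HeightOne) {i : Pos n} {z : ℤ}
    (h : P.lt z (-i.val)) : gradingCoeff P i = -1 / 2 :=
  if_neg fun ⟨_, h'⟩ => hP _ _ _ h h'

lemma lie_gradingElement_of_weight {P : TypeCPoset n} {M : Mat n} {a : Pos n → ℂ}
    (ha : ∀ i, ⁅Dmat i, M⁆ = a i • M) :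
    ⁅gradingElement P, M⁆ = (∑ i, gradingCoeff P i * a i) • M := by
  simp only [gradingElement, sum_lie, smul_lie, ha, smul_smul, Finset.sum_smul]

lemma lie_gradingElement {P : TypeCPoset n} (hP : P.HeightOne) {M : Mat n}
    (hM : M ∈ edgeMatrices P) : ⁅gradingElement P, M⁆ = M := by
  obtain ⟨i, j, hji, rfl⟩ | ⟨i, j, hij, hji, rfl⟩ | ⟨i, hi, rfl⟩ := hM
  · rw [lie_gradingElement_of_weight (lie_Dmat_rdash · i j)]
    norm_num [mul_sub, Finset.sum_sub_distrib, gradingCoeff_of_lt hji, gradingCoeff_of_gt hP hji]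
  · rw [lie_gradingElement_of_weight (lie_Dmat_rpm · i j)]
    norm_num [mul_add, Finset.sum_add_distrib, gradingCoeff_of_lt hij, gradingCoeff_of_lt hji]
  · rw [lie_gradingElement_of_weight (lie_Dmat_eloop · i)]
    simp [gradingCoeff_of_lt hi]

lemma lie_gradingElement_of_mem_span {P : TypeCPoset n} (hP : P.HeightOne) {x : Mat n}
    (hx : x ∈ Submodule.span ℂ (edgeMatrices P)) : ⁅gradingElement P, x⁆ = x := by
  induction hx using Submodule.span_induction with
  | mem M hM => exact lie_gradingElement hP hM
  | zero => exact lie_zero _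
  | add a b _ _ ha hb => rw [lie_add, ha, hb]
  | smul c a _ ha => rw [lie_smul, ha]

lemma apply_eq_zero_of_apply_lie_Dmat_eq_zero {P : TypeCPoset n} (hP : P.HeightOne)
    (Φ : Mat n →ₗ[ℂ] ℂ) {x : Mat n} (hx : x ∈ Submodule.span ℂ (edgeMatrices P))
    (hD : ∀ i : Pos n, Φ ⁅Dmat i, x⁆ = 0) : Φ x = 0 := by
  rw [← lie_gradingElement_of_mem_span hP hx]
  simp [gradingElement, sum_lie, hD]

lemma rdash_apply_neg_self (i j v : Pos n) : Rdash i j v.toIdx.neg v.toIdx = 0 := by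
  simp [Rdash]

lemma rpm_apply_neg_self {i j : Pos n} (hij : i ≠ j) (v : Pos n) :
    Rpm i j v.toIdx.neg v.toIdx = 0 := by
  simp only [Rpm, Matrix.add_apply, single_apply, Pos.neg_toIdx_inj, Pos.toIdx_inj]
  rw [if_neg fun h => hij (h.1.trans h.2.symm), if_neg fun h => hij (h.2.trans h.1.symm),
    add_zero]

lemma eloop_apply_neg_self (i v : Pos n) :
    Eloop i v.toIdx.neg v.toIdx = if i = v then 1 else 0 := by
  simp [Eloop, single_apply]

lemma exists_edgeMatrix_of_adj {P : TypeCPoset n} {q r : Pos n} (h : (RG P).Adj q r) :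
    ∃ M ∈ edgeMatrices P, (∀ v : Pos n, M v.toIdx.neg v.toIdx = 0) ∧
      ∃ a : Pos n → ℂ, a q ≠ 0 ∧ (∀ i, i ≠ q → i ≠ r → a i = 0) ∧
        ∀ i, ⁅Dmat i, M⁆ = a i • M := by
  obtain ⟨hqr, hrel⟩ := h
  have hedge : (P.lt (-q.val) r.val ∧ P.lt (-r.val) q.val) ∨
      P.lt (-q.val) (-r.val) ∨ P.lt (-r.val) (-q.val) := by
    rcases hrel with h | h | h | h
    · exact Or.inl ⟨h, (neg_lt hqr).mp h⟩
    · exact Or.inl ⟨(neg_lt hqr).mpr h, h⟩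
    · exact Or.inr (Or.inl h)
    · exact Or.inr (Or.inr h)
  rcases hedge with ⟨hq, hr⟩ | h | h
  · refine ⟨Rpm q r, Or.inr (Or.inl ⟨q, r, hq, hr, rfl⟩), rpm_apply_neg_self hqr, _,
      by simp [hqr], fun i hiq hir => by simp [hiq, hir], (lie_Dmat_rpm · q r)⟩
  · refine ⟨Rdash r q, Or.inl ⟨r, q, h, rfl⟩, rdash_apply_neg_self r q, _, by simp [hqr],
      fun i hiq hir => by simp [hiq, hir], (lie_Dmat_rdash · r q)⟩
  · refine ⟨Rdash q r, Or.inl ⟨q, r, h, rfl⟩, rdash_apply_neg_self q r, _, by simp [hqr],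
      fun i hiq hir => by simp [hiq, hir], (lie_Dmat_rdash · q r)⟩

def ConcentratedAt (P : TypeCPoset n) (Φ : Mat n →ₗ[ℂ] ℂ) (v q : Pos n) : Prop :=
  ∃ x ∈ Submodule.span ℂ (edgeMatrices P), x v.toIdx.neg v.toIdx ≠ 0 ∧
    ∃ c : ℂ, ∀ i, Φ ⁅Dmat i, x⁆ = if i = q then c else 0

namespace ConcentratedAt

variable {P : TypeCPoset n} {Φ : Mat n →ₗ[ℂ] ℂ} {v q r : Pos n}

lemma of_hasLoopAt (hv : P.HasLoopAt v) : ConcentratedAt P Φ v v := by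
  refine ⟨Eloop v, Submodule.subset_span (eloop_mem_edgeMatrices hv),
    by simp [eloop_apply_neg_self], 2 * Φ (Eloop v), fun i => ?_⟩
  rw [lie_Dmat_eloop, map_smul, smul_eq_mul]
  split_ifs <;> simp

lemma of_adj (hΦ : ∀ M ∈ edgeMatrices P, Φ M ≠ 0) (h : (RG P).Adj q r)
    (hq : ConcentratedAt P Φ v q) : ConcentratedAt P Φ v r := by
  obtain ⟨x, hx, hxv, c, hc⟩ := hq
  obtain ⟨M, hM, hMv, a, haq, ha, hDM⟩ := exists_edgeMatrix_of_adj h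
  have hΦM := hΦ M hM
  refine ⟨x - (c / (a q * Φ M)) • M,
    sub_mem hx (Submodule.smul_mem _ _ (Submodule.subset_span hM)), by simpa [hMv] using hxv,
    -(c * a r / a q), fun i => ?_⟩
  rw [lie_sub, lie_smul, map_sub, map_smul, hc, hDM, map_smul, smul_eq_mul, smul_eq_mul]
  by_cases hiq : i = q
  · subst hiq
    rw [if_pos rfl, if_neg h.ne]
    field_simp
    ring
  · by_cases hir : i = r
    · subst hir
      rw [if_neg hiq, if_pos rfl]
      field_simp
      ring
    · rw [if_neg hiq, if_neg hir, ha i hiq hir]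
      ring

lemma of_reachable (hΦ : ∀ M ∈ edgeMatrices P, Φ M ≠ 0) (h : (RG P).Reachable q r)
    (hq : ConcentratedAt P Φ v q) : ConcentratedAt P Φ v r := by
  obtain ⟨p⟩ := h
  induction p with
  | nil => exact hq
  | cons hadj _ ih => exact ih (hq.of_adj hΦ hadj)

end ConcentratedAt

lemma exists_ne_zero_forall_apply_lie_Dmat_eq_zero {P : TypeCPoset n}
    (hconn : (RG P).Connected) {v w : Pos n} (hvw : v ≠ w) (hv : P.HasLoopAt v)
    (hw : P.HasLoopAt w) (Φ : Mat n →ₗ[ℂ] ℂ) :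
    ∃ x ∈ Submodule.span ℂ (edgeMatrices P), x ≠ 0 ∧
      ∀ i : Pos n, Φ ⁅Dmat i, x⁆ = 0 := by
  by_cases hΦ : ∃ M ∈ edgeMatrices P, Φ M = 0
  · obtain ⟨M, hM, hΦM⟩ := hΦ
    obtain ⟨a, ha⟩ := exists_weight_of_mem_edgeMatrices hM
    exact ⟨M, Submodule.subset_span hM, ne_zero_of_mem_edgeMatrices hM,
      fun i => by rw [ha, map_smul, hΦM, smul_zero]⟩
  push Not at hΦ
  obtain ⟨x, hx, hxv, c, hc⟩ :=
    (ConcentratedAt.of_hasLoopAt (Φ := Φ) hv).of_reachable hΦ (hconn.preconnected v w)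
  have hΦw := hΦ _ (eloop_mem_edgeMatrices hw)
  refine ⟨x - (c / (2 * Φ (Eloop w))) • Eloop w,
    sub_mem hx (Submodule.smul_mem _ _ (Submodule.subset_span (eloop_mem_edgeMatrices hw))),
    fun h => hxv ?_, fun i => ?_⟩
  · simpa [eloop_apply_neg_self, Ne.symm hvw] using congrFun (congrFun h v.toIdx.neg) v.toIdx
  · rw [lie_sub, lie_smul, map_sub, map_smul, hc, lie_Dmat_eloop, map_smul, smul_eq_mul,
      smul_eq_mul]
    split_ifs
    · field_simp
      ring
    · ring

lemma apply_lie_eq_zero_of_mem_span_gcSet {P : TypeCPoset n} (hP : P.HeightOne)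
    {Φ : Mat n →ₗ[ℂ] ℂ} {x : Mat n} (hx : x ∈ Submodule.span ℂ (edgeMatrices P))
    (hD : ∀ i : Pos n, Φ ⁅Dmat i, x⁆ = 0) {y : Mat n}
    (hy : y ∈ Submodule.span ℂ (gcSet P)) :
    Φ ⁅x, y⁆ = 0 := by
  induction hy using Submodule.span_induction with
  | mem M hM =>
    rcases hM with ⟨i, rfl⟩ | hM
    · rw [← lie_skew, map_neg, hD i, neg_zero]
    · rw [lie_eq_zero_of_mem_span_edgeMatrices hP hx hM, map_zero]
  | zero => rw [lie_zero, map_zero]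
  | add a b _ _ ha hb => rw [lie_add, map_add, ha, hb, add_zero]
  | smul c a _ ha => rw [lie_smul, map_smul, ha, smul_zero]

/-- **Proposition.** Let `P` be a connected type-C poset of height one.  If `RG(P)`
contains two self-loops (at two distinct vertices), then `g_C(P)` is not contact. -/
theorem not_contact_of_two_selfLoops (n : ℕ) (P : TypeCPoset n)
    (hP : P.HeightOne) (hconn : (TypeCPoset.RG P).Connected)
    (hloops : ∃ v w : Pos n, v ≠ w ∧ P.HasLoopAt v ∧ P.HasLoopAt w)
    (g : LieSubalgebra ℂ (Mat n))
    (hg : g.toSubmodule = Submodule.span ℂ (TypeCPoset.gcSet P)) :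
    ¬ IsContact ↥g := by
  rintro ⟨φ, -, hφ⟩
  obtain ⟨v, w, hvw, hv, hw⟩ := hloops
  obtain ⟨Φ, hΦ⟩ := LinearMap.exists_extend (p := g.toSubmodule) φ
  have hΦφ (y : g) : Φ y = φ y := LinearMap.congr_fun hΦ y
  obtain ⟨x, hx, hx0, hD⟩ := exists_ne_zero_forall_apply_lie_Dmat_eq_zero hconn hvw hv hw Φ
  have hxg : x ∈ g := by
    rw [← LieSubalgebra.mem_toSubmodule, hg]
    exact Submodule.span_mono (edgeMatrices_subset_gcSet P) hx
  refine hx0 (congrArg Subtype.val (hφ ⟨x, hxg⟩ ?_ fun y _ => ?_))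
  · rw [← hΦφ]
    exact apply_eq_zero_of_apply_lie_Dmat_eq_zero hP Φ hx hD
  · have hy : (y : Mat n) ∈ Submodule.span ℂ (gcSet P) := hg ▸ y.2
    rw [← hΦφ]
    exact apply_lie_eq_zero_of_mem_span_gcSet hP hx hD hy

end LiePoset
end

section
/- Let P be a type-C poset of height one. Then the relation graph RG(P) contains none of the following configurations: (a) vertices i > j with a dashed edge {i,j} and a non-dashed self-loop at j; (b) two distinct vertices i, j joined by both a dashed edge and a non-dashed edge; (c) vertices i > j and k with a dashed edge {i,j} and a non-dashed edge {j,k}; (d) vertices i, j, k with dashed edges {i,j} and {j,k} where either i > j > k or i < j < k. -/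
open scoped DirectSum

/-! Each configuration yields a chain of three elements of `P`. A non-dashed edge `{i,j}` gives
both `-i ≺ j` and `-j ≺ i` by the type-C symmetry, and a dashed edge `{i,j}` with `j < i` can only
be `-i ≺ -j`, because `≼` refines the order of `ℤ`. -/

namespace LiePoset

namespace TypeCPoset

variable {n : ℕ} (P : TypeCPoset n)

theorem int_lt_of_lt {a b : ℤ} (h : P.lt a b) : a < b :=
  lt_of_le_of_ne (P.compat h.1) h.2

theorem lt_neg_comm_s17 {a b : ℤ} (h : P.lt (-a) b) : P.lt (-b) a := by
  obtain rfl | hab := eq_or_ne a b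
  · exact h
  · refine ⟨?_, fun hba => h.2 (by omega)⟩
    simpa using (P.nsymm (i := -a) (j := b) (by omega)).mp h.1

theorem nonDashedEdge_iff_lt (i j : Pos n) : P.NonDashedEdge i j ↔ P.lt (-i.val) j.val :=
  ⟨fun h => h.elim id (P.lt_neg_comm_s17 ·), Or.inl⟩

theorem nonDashedEdge_comm (i j : Pos n) : P.NonDashedEdge i j ↔ P.NonDashedEdge j i :=
  Or.comm

theorem dashedEdge_comm (i j : Pos n) : P.DashedEdge i j ↔ P.DashedEdge j i :=
  Or.comm

theorem dashedEdge_iff_of_lt {i j : Pos n} (hji : j.val < i.val) :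
    P.DashedEdge i j ↔ P.lt (-i.val) (-j.val) :=
  ⟨fun h => h.resolve_right fun h' => by have := P.int_lt_of_lt h'; omega, Or.inl⟩

end TypeCPoset

open TypeCPoset

/-- **Lemma (forbidden configurations).** If `P` is a type-C poset of height one, then
`RG(P)` contains none of the following configurations:
(a) vertices `i > j` with a dashed edge `{i,j}` and a non-dashed self-loop at `j`;
(b) two distinct vertices `i, j` joined by both a dashed and a non-dashed edge;
(c) vertices `i > j` and `k` with a dashed edge `{i,j}` and a non-dashed edge `{j,k}`;
(d) vertices `i, j, k` with dashed edges `{i,j}` and `{j,k}`, where `i > j > k` or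
`i < j < k`. -/
theorem forbidden_configurations_of_heightOne (n : ℕ) (P : TypeCPoset n)
    (hP : P.HeightOne) :
    (∀ i j : Pos n, j.val < i.val →
        ¬ (P.DashedEdge i j ∧ P.HasLoopAt j)) ∧
    (∀ i j : Pos n, i ≠ j →
        ¬ (P.DashedEdge i j ∧ P.NonDashedEdge i j)) ∧
    (∀ i j k : Pos n, j.val < i.val →
        ¬ (P.DashedEdge i j ∧ P.NonDashedEdge j k)) ∧
    (∀ i j k : Pos n, (k.val < j.val ∧ j.val < i.val) ∨ (i.val < j.val ∧ j.val < k.val) →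
        ¬ (P.DashedEdge i j ∧ P.DashedEdge j k)) := by
  refine ⟨?_, ?_, ?_, ?_⟩
  · rintro i j hji ⟨hd, hloop⟩
    exact hP _ _ _ ((P.dashedEdge_iff_of_lt hji).mp hd) hloop
  · rintro i j - ⟨hd | hd, hnd⟩
    · exact hP _ _ _ hd ((P.nonDashedEdge_iff_lt j i).mp ((P.nonDashedEdge_comm i j).mp hnd))
    · exact hP _ _ _ hd ((P.nonDashedEdge_iff_lt i j).mp hnd)
  · rintro i j k hji ⟨hd, hnd⟩
    exact hP _ _ _ ((P.dashedEdge_iff_of_lt hji).mp hd) ((P.nonDashedEdge_iff_lt j k).mp hnd)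
  · rintro i j k (⟨hkj, hji⟩ | ⟨hij, hjk⟩) ⟨hd₁, hd₂⟩
    · exact hP _ _ _ ((P.dashedEdge_iff_of_lt hji).mp hd₁) ((P.dashedEdge_iff_of_lt hkj).mp hd₂)
    · rw [dashedEdge_comm] at hd₁ hd₂
      exact hP _ _ _ ((P.dashedEdge_iff_of_lt hjk).mp hd₂) ((P.dashedEdge_iff_of_lt hij).mp hd₁)

end LiePoset
end
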